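/- For 0<q<1 and any nonnegative integer s, the q-zeta star value satisfies ζ_q^*[{2}^s] = ∑_{k=1}^∞ ((1+q^k)/[k]_q^{2s}) (-1)^{k-1} q^{k(k-1)/2 + sk}. -/

import Mathlib

open Finset

/-- q-analogue of a natural number: [m]_q = (1-q^m)/(1-q). -/
noncomputable def qnum (q : ℝ) (m : ℕ) : ℝ := (1 - q ^ m) / (1 - q)

/-- q-Pochhammer (q;q)_n = ∏_{k=0}^{n-1} (1 - q^{k+1}). -/
noncomputable def qPoch (q : ℝ) (n : ℕ) : ℝ := ∏ k ∈ Finset.range n, (1 - q ^ (k + 1))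

/-- Gaussian q-binomial coefficient, 0 when m > n. -/
noncomputable def qbinom (q : ℝ) (n m : ℕ) : ℝ :=
  if m ≤ n then qPoch q n / (qPoch q m * qPoch q (n - m)) else 0

/-- q-multiple harmonic star sum H_n^*[s₁,…,s_m]. -/
noncomputable def qHstar (q : ℝ) : List ℕ → ℕ → ℝ
  | [], _ => 1
  | s :: rest, n => ∑ k ∈ Finset.Icc 1 n, q ^ k / qnum q k ^ s * qHstar q rest k

/-- q-multiple zeta star value ζ_q^*[s₁,…,s_m]. -/
noncomputable def qZetaStar (q : ℝ) : List ℕ → ℝ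
  | [] => 1
  | s :: rest => ∑' k : ℕ, q ^ (k + 1) / qnum q (k + 1) ^ s * qHstar q rest (k + 1)

/-- strict multiple harmonic sum ∑_{n ≥ k₁ > … > k_r ≥ 1} ∏ 1/k_j^{p_j}. -/
noncomputable def Hstrict : List ℕ → ℕ → ℝ
  | [], _ => 1
  | p :: rest, n => ∑ k ∈ Finset.Icc 1 n, (1 : ℝ) / (k : ℝ) ^ p * Hstrict rest (k - 1)

/-- binomial-weighted strict multiple harmonic sum Ĥ_n(p). -/
noncomputable def Hhat : List ℕ → ℕ → ℝ
  | [], _ => 1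
  | p :: rest, n => ∑ k ∈ Finset.Icc 1 n,
      ((n.choose k : ℝ) / ((n + k).choose n)) * ((1 : ℝ) / (k : ℝ) ^ p) * Hstrict rest (k - 1)

/-- ordinary multiple harmonic star sum H_n^*(s₁,…,s_m). -/
noncomputable def HstarO : List ℕ → ℕ → ℝ
  | [], _ => 1
  | s :: rest, n => ∑ k ∈ Finset.Icc 1 n, (1 : ℝ) / (k : ℝ) ^ s * HstarO rest k

/-- ordinary multiple zeta star value. -/
noncomputable def zetaStarO : List ℕ → ℝ
  | [] => 1
  | s :: rest => ∑' k : ℕ, (1 : ℝ) / ((k : ℝ) + 1) ^ s * HstarO rest (k + 1)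

/-- Merge a list of parts according to a comma(true)/plus(false) pattern. -/
def mergeComp : ℕ → List ℕ → List Bool → List ℕ
  | a, [], _ => [a]
  | a, _ :: _, [] => [a]
  | a, b :: t, true :: bs => a :: mergeComp b t bs
  | a, b :: t, false :: bs => mergeComp (a + b) t bs


/-!
With `B n k = (q;q)_n ^ 2 / ((q;q)_(n-k) (q;q)_(n+k))`, the finite identity
`H_n^*[{2}^s] = ∑_{k=1}^n c_s(k) B n k` holds for `n ≥ 1`, where `c_s(k)` is the `k`-th term of the
series. For `s = 0` the sum telescopes, and the step from `s` to `s + 1` rests on the fact that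
`q^m / [m]_q^2 * B m k` telescopes in `m` to `q^k / [k]_q^2 * B n k`. As `(q;q)_n` decreases to the
positive limit `(q;q)_∞`, `B n k → 1` with `|B n k| ≤ (q;q)_∞⁻²`, and Tannery's theorem lets `n → ∞`.
-/

open Filter Topology

section QNumbers

variable {q : ℝ}

lemma one_sub_pow_pos (hq0 : 0 ≤ q) (hq1 : q < 1) {m : ℕ} (hm : m ≠ 0) : 0 < 1 - q ^ m :=
  sub_pos.2 (pow_lt_one₀ hq0 hq1 hm)

lemma qnum_nonneg (hq0 : 0 ≤ q) (hq1 : q < 1) (k : ℕ) : 0 ≤ qnum q k :=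
  div_nonneg (sub_nonneg.2 (pow_le_one₀ hq0 hq1.le)) (sub_nonneg.2 hq1.le)

lemma one_le_qnum (hq0 : 0 ≤ q) (hq1 : q < 1) {k : ℕ} (hk : k ≠ 0) : 1 ≤ qnum q k := by
  rw [qnum, le_div_iff₀ (sub_pos.2 hq1)]
  linarith [pow_le_of_le_one hq0 hq1.le hk]

lemma pow_div_qnum_pow_le (hq0 : 0 ≤ q) (hq1 : q < 1) {k : ℕ} (hk : k ≠ 0) (s : ℕ) :
    q ^ k / qnum q k ^ s ≤ q ^ k :=
  div_le_self (pow_nonneg hq0 k) (one_le_pow₀ (one_le_qnum hq0 hq1 hk))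

end QNumbers

section QPochhammer

variable {q : ℝ}

lemma qPoch_zero : qPoch q 0 = 1 := prod_range_zero _

lemma qPoch_succ (n : ℕ) : qPoch q (n + 1) = qPoch q n * (1 - q ^ (n + 1)) :=
  prod_range_succ _ _

lemma qPoch_pos (hq0 : 0 ≤ q) (hq1 : q < 1) (n : ℕ) : 0 < qPoch q n :=
  prod_pos fun k _ => one_sub_pow_pos hq0 hq1 (Nat.add_one_ne_zero k)

lemma qPoch_antitone (hq0 : 0 ≤ q) (hq1 : q < 1) : Antitone (qPoch q) :=
  antitone_nat_of_succ_le fun n => by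
    rw [qPoch_succ]
    exact mul_le_of_le_one_right (qPoch_pos hq0 hq1 n).le (by linarith [pow_nonneg hq0 (n + 1)])

lemma qPoch_le_one (hq0 : 0 ≤ q) (hq1 : q < 1) (n : ℕ) : qPoch q n ≤ 1 :=
  qPoch_zero (q := q) ▸ qPoch_antitone hq0 hq1 (Nat.zero_le n)

lemma summable_norm_neg_pow_succ (hq0 : 0 ≤ q) (hq1 : q < 1) :
    Summable fun j : ℕ => ‖-q ^ (j + 1)‖ := by
  simpa [abs_of_nonneg hq0, pow_succ] using (summable_geometric_of_lt_one hq0 hq1).mul_right q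

lemma tendsto_qPoch (hq0 : 0 ≤ q) (hq1 : q < 1) :
    Tendsto (qPoch q) atTop (𝓝 (∏' j : ℕ, (1 - q ^ (j + 1)))) := by
  have h := (multipliable_one_add_of_summable
    (summable_norm_neg_pow_succ hq0 hq1)).tendsto_prod_tprod_nat
  simp only [← sub_eq_add_neg] at h
  exact h

lemma tprod_one_sub_pow_pos (hq0 : 0 ≤ q) (hq1 : q < 1) :
    0 < ∏' j : ℕ, (1 - q ^ (j + 1)) := by
  refine lt_of_le_of_ne ?_ (Ne.symm ?_)
  · exact ge_of_tendsto' (tendsto_qPoch hq0 hq1) fun n => (qPoch_pos hq0 hq1 n).le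
  · simpa only [sub_eq_add_neg] using tprod_one_add_ne_zero_of_summable
      (fun j => by
        rw [← sub_eq_add_neg]
        exact (one_sub_pow_pos hq0 hq1 (Nat.add_one_ne_zero j)).ne')
      (summable_norm_neg_pow_succ hq0 hq1)

lemma tprod_one_sub_pow_le_qPoch (hq0 : 0 ≤ q) (hq1 : q < 1) (n : ℕ) :
    ∏' j : ℕ, (1 - q ^ (j + 1)) ≤ qPoch q n :=
  (qPoch_antitone hq0 hq1).le_of_tendsto (tendsto_qPoch hq0 hq1) n

end QPochhammer

/-- The q-analogue of `n.choose k / (n + k).choose k`. -/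
noncomputable def qBinomRatio (q : ℝ) (n k : ℕ) : ℝ :=
  if k ≤ n then qPoch q n ^ 2 / (qPoch q (n - k) * qPoch q (n + k)) else 0

section QBinomRatio

variable {q : ℝ}

lemma qBinomRatio_of_le {n k : ℕ} (h : k ≤ n) :
    qBinomRatio q n k = qPoch q n ^ 2 / (qPoch q (n - k) * qPoch q (n + k)) :=
  if_pos h

lemma qBinomRatio_of_lt {n k : ℕ} (h : n < k) : qBinomRatio q n k = 0 :=
  if_neg (by omega)

lemma qBinomRatio_zero_right (hq0 : 0 ≤ q) (hq1 : q < 1) (n : ℕ) : qBinomRatio q n 0 = 1 := by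
  have := (qPoch_pos hq0 hq1 n).ne'
  rw [qBinomRatio_of_le n.zero_le, Nat.sub_zero, add_zero]
  field_simp

lemma qBinomRatio_succ_right (hq0 : 0 ≤ q) (hq1 : q < 1) {n k : ℕ} (hk : k ≤ n) :
    qBinomRatio q n (k + 1) * (1 - q ^ (n + k + 1)) = qBinomRatio q n k * (1 - q ^ (n - k)) := by
  rcases hk.eq_or_lt with rfl | hk
  · rw [qBinomRatio_of_lt (by omega), Nat.sub_self, pow_zero]
    ring
  rw [qBinomRatio_of_le hk, qBinomRatio_of_le hk.le, show n - k = n - (k + 1) + 1 by omega,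
    show n + (k + 1) = n + k + 1 by ring, qPoch_succ (n - (k + 1)), qPoch_succ (n + k)]
  have := (qPoch_pos hq0 hq1 (n - (k + 1))).ne'
  have := (qPoch_pos hq0 hq1 (n + k)).ne'
  have := (one_sub_pow_pos hq0 hq1 (Nat.add_one_ne_zero (n - (k + 1)))).ne'
  have := (one_sub_pow_pos hq0 hq1 (Nat.add_one_ne_zero (n + k))).ne'
  field_simp

lemma qBinomRatio_succ_left (hq0 : 0 ≤ q) (hq1 : q < 1) {n k : ℕ} (hk : k ≤ n) :
    qBinomRatio q (n + 1) k * ((1 - q ^ (n + 1 - k)) * (1 - q ^ (n + 1 + k)))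
      = qBinomRatio q n k * (1 - q ^ (n + 1)) ^ 2 := by
  rw [qBinomRatio_of_le (by omega), qBinomRatio_of_le hk, show n + 1 - k = n - k + 1 by omega,
    show n + 1 + k = n + k + 1 by ring, qPoch_succ (n - k), qPoch_succ (n + k), qPoch_succ n]
  have := (qPoch_pos hq0 hq1 (n - k)).ne'
  have := (qPoch_pos hq0 hq1 (n + k)).ne'
  have := (one_sub_pow_pos hq0 hq1 (Nat.add_one_ne_zero (n - k))).ne'
  have := (one_sub_pow_pos hq0 hq1 (Nat.add_one_ne_zero (n + k))).ne'
  field_simp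

lemma abs_qBinomRatio_le (hq0 : 0 ≤ q) (hq1 : q < 1) (n k : ℕ) :
    |qBinomRatio q n k| ≤ ((∏' j : ℕ, (1 - q ^ (j + 1))) ^ 2)⁻¹ := by
  have hP := tprod_one_sub_pow_pos hq0 hq1
  unfold qBinomRatio
  split_ifs
  · have hden : (∏' j : ℕ, (1 - q ^ (j + 1))) ^ 2 ≤ qPoch q (n - k) * qPoch q (n + k) :=
      sq (∏' j : ℕ, (1 - q ^ (j + 1))) ▸ mul_le_mul (tprod_one_sub_pow_le_qPoch hq0 hq1 _)
        (tprod_one_sub_pow_le_qPoch hq0 hq1 _) hP.le (qPoch_pos hq0 hq1 _).le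
    rw [abs_of_nonneg (div_nonneg (sq_nonneg _) (hden.trans' (by positivity))), ← one_div]
    exact div_le_div₀ zero_le_one
      (pow_le_one₀ (qPoch_pos hq0 hq1 n).le (qPoch_le_one hq0 hq1 n)) (by positivity) hden
  · simp [hP.le]

lemma tendsto_qBinomRatio (hq0 : 0 ≤ q) (hq1 : q < 1) (k : ℕ) :
    Tendsto (fun n => qBinomRatio q n k) atTop (𝓝 1) := by
  set P := ∏' j : ℕ, (1 - q ^ (j + 1))
  have hP : P ≠ 0 := (tprod_one_sub_pow_pos hq0 hq1).ne'
  have hlim : Tendsto (fun n => qPoch q n ^ 2 / (qPoch q (n - k) * qPoch q (n + k))) atTop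
      (𝓝 (P ^ 2 / (P * P))) :=
    ((tendsto_qPoch hq0 hq1).pow 2).div
      (((tendsto_qPoch hq0 hq1).comp (tendsto_sub_atTop_nat k)).mul
        ((tendsto_qPoch hq0 hq1).comp (tendsto_add_atTop_nat k))) (mul_ne_zero hP hP)
  rw [sq, div_self (mul_ne_zero hP hP)] at hlim
  exact hlim.congr' ((eventually_ge_atTop k).mono fun n hn => (qBinomRatio_of_le hn).symm)

end QBinomRatio

section FiniteIdentity

variable {q : ℝ}

lemma sum_alternating_qBinomRatio (hq0 : 0 ≤ q) (hq1 : q < 1) {n : ℕ} (hn : n ≠ 0) :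
    ∑ k ∈ Icc 1 n, (-1) ^ (k - 1) * (1 + q ^ k) * q ^ k.choose 2 * qBinomRatio q n k = 1 := by
  have hn' := (one_sub_pow_pos hq0 hq1 hn).ne'
  -- `w k` is the tail `∑_{i=k}^n` of the sum.
  set w : ℕ → ℝ := fun k =>
    (-1) ^ (k - 1) * q ^ k.choose 2 * qBinomRatio q n k * (1 - q ^ (n + k)) / (1 - q ^ n)
  have hterm : ∀ k ∈ Icc 1 n,
      (-1) ^ (k - 1) * (1 + q ^ k) * q ^ k.choose 2 * qBinomRatio q n k = -(w (k + 1) - w k) := by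
    intro k hk
    obtain ⟨j, rfl⟩ : ∃ j, k = j + 1 := ⟨k - 1, by grind⟩
    obtain ⟨m, rfl⟩ : ∃ m, n = m + (j + 1) := ⟨n - (j + 1), by grind⟩
    have h := qBinomRatio_succ_right hq0 hq1 (Nat.le_add_left (j + 1) m)
    simp only [w, Nat.add_sub_cancel, Nat.choose_succ_succ' (j + 1), Nat.choose_one_right] at h ⊢
    field_simp
    linear_combination (-1) ^ (j + 1) * q ^ (j + 1 + (j + 1).choose 2) * h
  have hw1 : w 1 = 1 := by
    have h := qBinomRatio_succ_right hq0 hq1 (Nat.zero_le n)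
    simp only [qBinomRatio_zero_right hq0 hq1, zero_add, add_zero, Nat.sub_zero, one_mul] at h
    simp only [w, Nat.sub_self, pow_zero, Nat.choose_eq_zero_of_lt one_lt_two, one_mul, h]
    exact div_self hn'
  have hwn : w (n + 1) = 0 := by simp [w, qBinomRatio_of_lt (Nat.lt_succ_self n)]
  rw [sum_congr rfl hterm, sum_neg_distrib, sum_Icc_sub (by omega), hw1, hwn]
  ring

lemma pow_div_qnum_sq_mul_qBinomRatio_succ (hq0 : 0 ≤ q) (hq1 : q < 1) {k : ℕ} (hk : k ≠ 0)
    (n : ℕ) :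
    q ^ (n + 1) / qnum q (n + 1) ^ 2 * qBinomRatio q (n + 1) k
      = q ^ k / qnum q k ^ 2 * (qBinomRatio q (n + 1) k - qBinomRatio q n k) := by
  rcases Nat.lt_or_ge n k with h | h
  · rcases (Nat.succ_le_of_lt h).eq_or_lt with rfl | h'
    · rw [qBinomRatio_of_lt h, sub_zero]
    · simp [qBinomRatio_of_lt h, qBinomRatio_of_lt h']
  obtain ⟨j, rfl⟩ := Nat.exists_eq_add_of_le' h
  have hB := qBinomRatio_succ_left hq0 hq1 h
  rw [show j + k + 1 - k = j + 1 by omega] at hB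
  have hjk := (one_sub_pow_pos hq0 hq1 (Nat.add_one_ne_zero (j + k))).ne'
  have := (one_sub_pow_pos hq0 hq1 hk).ne'

  have : 1 - q ≠ 0 := by linarith
  rw [(eq_div_iff (pow_ne_zero 2 hjk)).2 hB.symm, qnum, qnum]
  field_simp
  ring

lemma sum_pow_div_qnum_sq_mul_qBinomRatio (hq0 : 0 ≤ q) (hq1 : q < 1) {k : ℕ} (hk : k ≠ 0)
    (n : ℕ) :
    ∑ m ∈ Icc 1 n, q ^ m / qnum q m ^ 2 * qBinomRatio q m k
      = q ^ k / qnum q k ^ 2 * qBinomRatio q n k := by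
  induction n with
  | zero => simp [qBinomRatio_of_lt (Nat.pos_of_ne_zero hk)]
  | succ n ih =>
    rw [sum_Icc_succ_top (by omega), ih, pow_div_qnum_sq_mul_qBinomRatio_succ hq0 hq1 hk]
    ring

end FiniteIdentity

noncomputable def twoStarCoeff (q : ℝ) (s k : ℕ) : ℝ :=
  (-1) ^ (k - 1) * (1 + q ^ k) * q ^ (k.choose 2 + s * k) / qnum q k ^ (2 * s)

section TwoStar

variable {q : ℝ}

lemma twoStarCoeff_succ (hq0 : 0 ≤ q) (hq1 : q < 1) (s : ℕ) {k : ℕ} (hk : k ≠ 0) :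
    twoStarCoeff q (s + 1) k = q ^ k / qnum q k ^ 2 * twoStarCoeff q s k := by
  have := (zero_lt_one.trans_le (one_le_qnum hq0 hq1 hk)).ne'
  rw [twoStarCoeff, twoStarCoeff]
  field_simp
  ring

lemma qHstar_replicate_two (hq0 : 0 ≤ q) (hq1 : q < 1) (s : ℕ) {n : ℕ} (hn : n ≠ 0) :
    qHstar q (List.replicate s 2) n
      = ∑ k ∈ Icc 1 n, twoStarCoeff q s k * qBinomRatio q n k := by
  induction s generalizing n with
  | zero =>
    refine (sum_alternating_qBinomRatio hq0 hq1 hn).symm.trans (sum_congr rfl fun k _ => ?_)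
    simp [twoStarCoeff]
  | succ s ih =>
    have hextend : ∀ m ∈ Icc 1 n, ∑ k ∈ Icc 1 m, twoStarCoeff q s k * qBinomRatio q m k
        = ∑ k ∈ Icc 1 n, twoStarCoeff q s k * qBinomRatio q m k := fun m hm =>
      sum_subset (Icc_subset_Icc_right (mem_Icc.1 hm).2) fun k hk hkm => by
        rw [qBinomRatio_of_lt (by grind), mul_zero]
    calc qHstar q (List.replicate (s + 1) 2) n
        = ∑ m ∈ Icc 1 n, q ^ m / qnum q m ^ 2 * qHstar q (List.replicate s 2) m := rfl
      _ = ∑ m ∈ Icc 1 n, ∑ k ∈ Icc 1 n,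
            twoStarCoeff q s k * (q ^ m / qnum q m ^ 2 * qBinomRatio q m k) := by
        refine sum_congr rfl fun m hm => ?_
        rw [ih (by grind), hextend m hm, mul_sum]
        exact sum_congr rfl fun k _ => by ring
      _ = ∑ k ∈ Icc 1 n, twoStarCoeff q (s + 1) k * qBinomRatio q n k := by
        rw [sum_comm]
        refine sum_congr rfl fun k hk => ?_
        have hk : k ≠ 0 := by grind
        rw [← mul_sum, sum_pow_div_qnum_sq_mul_qBinomRatio hq0 hq1 hk,
          twoStarCoeff_succ hq0 hq1 s hk]
        ring

lemma abs_twoStarCoeff_succ_le (hq0 : 0 ≤ q) (hq1 : q < 1) (s k : ℕ) :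
    |twoStarCoeff q s (k + 1)| ≤ 2 * q ^ k := by
  have hexp : k ≤ (k + 1).choose 2 + s * (k + 1) := by
    rw [Nat.choose_succ_succ', Nat.choose_one_right]
    omega
  rw [twoStarCoeff, abs_div, abs_mul, abs_mul, abs_pow, abs_neg, abs_one, one_pow, one_mul,
    abs_of_nonneg (by positivity), abs_of_nonneg (by positivity),
    abs_of_nonneg (pow_nonneg (qnum_nonneg hq0 hq1 _) _)]
  calc (1 + q ^ (k + 1)) * q ^ ((k + 1).choose 2 + s * (k + 1)) / qnum q (k + 1) ^ (2 * s)
      ≤ (1 + q ^ (k + 1)) * q ^ ((k + 1).choose 2 + s * (k + 1)) :=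
        div_le_self (by positivity) (one_le_pow₀ (one_le_qnum hq0 hq1 (Nat.add_one_ne_zero k)))
    _ ≤ 2 * q ^ k :=
        mul_le_mul (by linarith [pow_le_one₀ (n := k + 1) hq0 hq1.le])
          (pow_le_pow_of_le_one hq0 hq1.le hexp) (pow_nonneg hq0 _) zero_le_two

end TwoStar

lemma Finset.sum_Icc_one_eq_sum_range {M : Type*} [AddCommMonoid M] (f : ℕ → M) (n : ℕ) :
    ∑ k ∈ Icc 1 n, f k = ∑ k ∈ range n, f (k + 1) := by
  rw [range_eq_Ico, sum_Ico_add', zero_add, Ico_add_one_right_eq_Icc]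

section Limits

variable {q : ℝ}

lemma qHstar_nonneg (hq0 : 0 ≤ q) (hq1 : q < 1) (l : List ℕ) (n : ℕ) :
    0 ≤ qHstar q l n := by
  induction l generalizing n with
  | nil => exact zero_le_one
  | cons s l ih =>
    exact sum_nonneg fun k _ =>
      mul_nonneg (div_nonneg (pow_nonneg hq0 k) (pow_nonneg (qnum_nonneg hq0 hq1 k) s)) (ih k)

lemma qHstar_le (hq0 : 0 ≤ q) (hq1 : q < 1) (l : List ℕ) (n : ℕ) :
    qHstar q l n ≤ (1 - q)⁻¹ ^ l.length := by
  induction l generalizing n with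
  | nil => exact le_rfl
  | cons s l ih =>
    calc qHstar q (s :: l) n = ∑ k ∈ Icc 1 n, q ^ k / qnum q k ^ s * qHstar q l k := rfl
      _ ≤ ∑ k ∈ Icc 1 n, q ^ k * (1 - q)⁻¹ ^ l.length := by
        refine sum_le_sum fun k hk => ?_
        exact mul_le_mul (pow_div_qnum_pow_le hq0 hq1 (by grind) s) (ih k)
          (qHstar_nonneg hq0 hq1 l k) (pow_nonneg hq0 k)
      _ ≤ (∑' k, q ^ k) * (1 - q)⁻¹ ^ l.length := by
        rw [← sum_mul]
        gcongr
        exact (summable_geometric_of_lt_one hq0 hq1).sum_le_tsum _ fun k _ => pow_nonneg hq0 k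
      _ = (1 - q)⁻¹ ^ (s :: l).length := by
        rw [tsum_geometric_of_lt_one hq0 hq1, List.length_cons, pow_succ']

lemma tendsto_qHstar (hq0 : 0 ≤ q) (hq1 : q < 1) (l : List ℕ) :
    Tendsto (qHstar q l) atTop (𝓝 (qZetaStar q l)) := by
  rcases l with _ | ⟨s, l⟩
  · exact tendsto_const_nhds
  have hsum : Summable fun k : ℕ => q ^ (k + 1) / qnum q (k + 1) ^ s * qHstar q l (k + 1) := by
    refine Summable.of_nonneg_of_le (fun k => ?_) (fun k => ?_)
      (((summable_geometric_of_lt_one hq0 hq1).mul_left q).mul_right ((1 - q)⁻¹ ^ l.length))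
    · exact mul_nonneg (div_nonneg (pow_nonneg hq0 _) (pow_nonneg (qnum_nonneg hq0 hq1 _) s))
        (qHstar_nonneg hq0 hq1 l _)
    · rw [← pow_succ']
      exact mul_le_mul (pow_div_qnum_pow_le hq0 hq1 (Nat.add_one_ne_zero k) s)
        (qHstar_le hq0 hq1 l _) (qHstar_nonneg hq0 hq1 l _) (pow_nonneg hq0 _)
  refine hsum.hasSum.tendsto_sum_nat.congr fun n => ?_
  exact (sum_Icc_one_eq_sum_range (fun k => q ^ k / qnum q k ^ s * qHstar q l k) n).symm

lemma tendsto_sum_twoStarCoeff_mul_qBinomRatio (hq0 : 0 ≤ q) (hq1 : q < 1) (s : ℕ) :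
    Tendsto (fun n => ∑ k ∈ Icc 1 n, twoStarCoeff q s k * qBinomRatio q n k) atTop
      (𝓝 (∑' k, twoStarCoeff q s (k + 1))) := by
  have hfinite : ∀ n, ∑ k ∈ Icc 1 n, twoStarCoeff q s k * qBinomRatio q n k
      = ∑' k, twoStarCoeff q s (k + 1) * qBinomRatio q n (k + 1) := fun n => by
    rw [sum_Icc_one_eq_sum_range, tsum_eq_sum (s := range n) fun k hk => by
      rw [qBinomRatio_of_lt (by simp at hk; omega), mul_zero]]
  simp only [hfinite]
  refine tendsto_tsum_of_dominated_convergence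
    (((summable_geometric_of_lt_one hq0 hq1).mul_left 2).mul_right
      ((∏' j : ℕ, (1 - q ^ (j + 1))) ^ 2)⁻¹) (fun k => ?_)
    (Eventually.of_forall fun n k => ?_)
  · simpa using (tendsto_qBinomRatio hq0 hq1 (k + 1)).const_mul (twoStarCoeff q s (k + 1))
  · rw [Real.norm_eq_abs, abs_mul]
    exact mul_le_mul (abs_twoStarCoeff_succ_le hq0 hq1 s k) (abs_qBinomRatio_le hq0 hq1 n _)
      (abs_nonneg _) (by positivity)

end Limits

theorem stmt9 (q : ℝ) (hq0 : 0 < q) (hq1 : q < 1) (s : ℕ) :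
    qZetaStar q (List.replicate s 2)
    = ∑' k : ℕ, (1 + q ^ (k + 1)) / qnum q (k + 1) ^ (2 * s) *
        (-1 : ℝ) ^ k * q ^ ((k + 1) * k / 2 + s * (k + 1)) := by
  have hsum : Tendsto (qHstar q (List.replicate s 2)) atTop
      (𝓝 (∑' k, twoStarCoeff q s (k + 1))) :=
    (tendsto_sum_twoStarCoeff_mul_qBinomRatio hq0.le hq1 s).congr' <|
      (eventually_ne_atTop 0).mono fun n hn => (qHstar_replicate_two hq0.le hq1 s hn).symm
  rw [tendsto_nhds_unique (tendsto_qHstar hq0.le hq1 _) hsum]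
  refine tsum_congr fun k => ?_
  rw [twoStarCoeff, Nat.add_sub_cancel, Nat.choose_two_right, Nat.add_sub_cancel]
  ring
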